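/- Consider a single score-update step s̃ = s − α • g with α > 0, where g i = ∂L/∂m_i is the (fixed) gradient of the loss with respect to the mask. Let m, m̃ be the top-k masks of s, s̃ (all score values distinct before and after the update), let A = {i | m i = 0 ∧ m̃ i = 1} and B = {j | m j = 1 ∧ m̃ j = 0}. Then the first-order loss change ∑_{i∈A} g i − ∑_{j∈B} g j is ≤ 0, and it is < 0 whenever A is nonempty. -/

import Mathlib

/-!
Both masks select the same number of indices, so `|A| = |B|`. An index `i ∈ A` overtakes an index
`j ∈ B` in the ranking: `s i < s j` but `s' j < s' i`. Since `s' = s - α g` with `α > 0`, this forces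
`g i < g j`. Every gradient entry summed over `A` is therefore smaller than every one summed over the
equally large set `B`.
-/

noncomputable def topkMask (n k : ℕ) (s : Fin n → ℝ) (i : Fin n) : Bool :=
  decide ((Finset.univ.filter (fun j => s i < s j)).card < k)

open Finset

section Sums

variable {ι M : Type*} [AddCommMonoid M] [LinearOrder M] [IsOrderedCancelAddMonoid M]
  {s t : Finset ι} {f : ι → M}

theorem Finset.sum_lt_sum_of_card_eq_of_forall_lt (hcard : #s = #t) (hs : s.Nonempty)
    (hlt : ∀ i ∈ s, ∀ j ∈ t, f i < f j) : ∑ i ∈ s, f i < ∑ j ∈ t, f j := by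
  obtain ⟨a, ha, hmax⟩ := s.exists_max_image f hs
  obtain ⟨b, hb, hmin⟩ := t.exists_min_image f (card_pos.1 (hcard ▸ hs.card_pos))
  calc ∑ i ∈ s, f i ≤ #s • f a := sum_le_card_nsmul s f (f a) hmax
    _ < #s • f b := nsmul_lt_nsmul_right hs.card_pos.ne' (hlt a ha b hb)
    _ = #t • f b := by rw [hcard]
    _ ≤ ∑ j ∈ t, f j := card_nsmul_le_sum t f (f b) hmin

theorem Finset.sum_le_sum_of_card_eq_of_forall_lt (hcard : #s = #t)
    (hlt : ∀ i ∈ s, ∀ j ∈ t, f i < f j) : ∑ i ∈ s, f i ≤ ∑ j ∈ t, f j := by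
  rcases s.eq_empty_or_nonempty with rfl | hs
  · rw [card_empty, eq_comm, card_eq_zero] at hcard
    simp [hcard]
  · exact (sum_lt_sum_of_card_eq_of_forall_lt hcard hs hlt).le

end Sums

section Rank

variable {ι α : Type*} [Fintype ι] [LinearOrder α]

def rank (s : ι → α) (i : ι) : ℕ := #{j | s i < s j}

theorem rank_le_rank_of_le (s : ι → α) {i j : ι} (h : s i ≤ s j) : rank s j ≤ rank s i :=
  card_le_card fun _ hl => by simp only [mem_filter, mem_univ, true_and] at hl ⊢; exact h.trans_lt hl

theorem rank_lt_rank_of_lt (s : ι → α) {i j : ι} (h : s i < s j) : rank s j < rank s i := by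
  refine card_lt_card ⟨fun _ hl => ?_, fun hsub => ?_⟩
  · simp only [mem_filter, mem_univ, true_and] at hl ⊢
    exact h.trans hl
  · simpa using hsub (by simpa using h : j ∈ ({l | s i < s l} : Finset ι))

theorem rank_injective {s : ι → α} (hs : Function.Injective s) : Function.Injective (rank s) := by
  intro i j hij
  by_contra hne
  rcases (hs.ne hne).lt_or_gt with h | h
  · exact (rank_lt_rank_of_lt s h).ne' hij
  · exact (rank_lt_rank_of_lt s h).ne hij

theorem rank_lt_card (s : ι → α) (i : ι) : rank s i < Fintype.card ι :=
  card_lt_card (filter_ssubset.2 ⟨i, mem_univ i, lt_irrefl _⟩)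

theorem image_rank {s : ι → α} (hs : Function.Injective s) :
    univ.image (rank s) = range (Fintype.card ι) :=
  eq_of_subset_of_card_le (fun _ hm => by
      obtain ⟨i, -, rfl⟩ := mem_image.1 hm
      exact mem_range.2 (rank_lt_card s i))
    (by rw [card_range, card_image_of_injective _ (rank_injective hs), card_univ])

theorem card_filter_rank_lt {s : ι → α} (hs : Function.Injective s) (k : ℕ) :
    #{i | rank s i < k} = min k (Fintype.card ι) := by
  rw [← card_image_of_injective _ (rank_injective hs), ← filter_image (p := (· < k)), image_rank hs]
  convert card_range (min k (Fintype.card ι)) using 2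
  ext m
  simp [and_comm]

end Rank

section TopkMask

variable {n k : ℕ}

theorem topkMask_eq_true_iff (s : Fin n → ℝ) (i : Fin n) : topkMask n k s i = true ↔ rank s i < k := by
  simp [topkMask, rank]

theorem card_filter_topkMask {s : Fin n → ℝ} (hs : Function.Injective s) :
    #{i | topkMask n k s i = true} = min k n := by
  simp only [topkMask_eq_true_iff]
  rw [card_filter_rank_lt hs, Fintype.card_fin]

theorem lt_of_topkMask_false_of_true {s : Fin n → ℝ} {i j : Fin n} (hi : topkMask n k s i = false)
    (hj : topkMask n k s j = true) : s i < s j := by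
  by_contra! hji
  rw [topkMask_eq_true_iff] at hj
  rw [← Bool.not_eq_true, topkMask_eq_true_iff] at hi
  exact hi ((rank_le_rank_of_le s hji).trans_lt hj)

theorem card_topkMask_enter_eq_card_leave {s s' : Fin n → ℝ} (hs : Function.Injective s)
    (hs' : Function.Injective s') :
    #{i | topkMask n k s i = false ∧ topkMask n k s' i = true}
      = #{i | topkMask n k s i = true ∧ topkMask n k s' i = false} := by
  have hsdiff (t t' : Fin n → ℝ) :
      univ.filter (fun i => topkMask n k t i = false ∧ topkMask n k t' i = true)
        = univ.filter (fun i => topkMask n k t' i = true)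
          \ univ.filter (fun i => topkMask n k t i = true) := by
    rw [← filter_and_not]
    simp only [Bool.not_eq_true, and_comm]
  rw [hsdiff, filter_congr fun i _ => and_comm, hsdiff]
  exact card_sdiff_comm ((card_filter_topkMask hs').trans (card_filter_topkMask hs).symm)

end TopkMask

theorem stmt_9_general (n k : ℕ)
    (s g : Fin n → ℝ) (α : ℝ) (hα : 0 < α)
    (s' : Fin n → ℝ) (hs' : s' = fun i => s i - α * g i)
    (hinj : Function.Injective s) (hinj' : Function.Injective s')
    (A B : Finset (Fin n))
    (hA : A = Finset.univ.filter
        (fun i => topkMask n k s i = false ∧ topkMask n k s' i = true))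
    (hB : B = Finset.univ.filter
        (fun j => topkMask n k s j = true ∧ topkMask n k s' j = false)) :
    (∑ i ∈ A, g i) - (∑ j ∈ B, g j) ≤ 0 ∧
      (A.Nonempty → (∑ i ∈ A, g i) - (∑ j ∈ B, g j) < 0) := by
  have hcard : #A = #B := hA ▸ hB ▸ card_topkMask_enter_eq_card_leave hinj hinj'
  have hlt : ∀ i ∈ A, ∀ j ∈ B, g i < g j := by
    intro i hi j hj
    simp only [hA, hB, mem_filter, mem_univ, true_and] at hi hj
    have hsij : s i < s j := lt_of_topkMask_false_of_true hi.1 hj.1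
    have hsji : s' j < s' i := lt_of_topkMask_false_of_true hj.2 hi.2
    subst hs'
    exact lt_of_mul_lt_mul_left (by linarith) hα.le
  exact ⟨sub_nonpos.2 (sum_le_sum_of_card_eq_of_forall_lt hcard hlt),
    fun hA => sub_neg.2 (sum_lt_sum_of_card_eq_of_forall_lt hcard hA hlt)⟩

theorem stmt_9 (n k : ℕ) (hk : k ≤ n)
    (s g : Fin n → ℝ) (α : ℝ) (hα : 0 < α)
    (s' : Fin n → ℝ) (hs' : s' = fun i => s i - α * g i)
    (hinj : Function.Injective s) (hinj' : Function.Injective s')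
    (A B : Finset (Fin n))
    (hA : A = Finset.univ.filter
        (fun i => topkMask n k s i = false ∧ topkMask n k s' i = true))
    (hB : B = Finset.univ.filter
        (fun j => topkMask n k s j = true ∧ topkMask n k s' j = false)) :
    (∑ i ∈ A, g i) - (∑ j ∈ B, g j) ≤ 0 ∧
      (A.Nonempty → (∑ i ∈ A, g i) - (∑ j ∈ B, g j) < 0) :=
  stmt_9_general n k s g α hα s' hs' hinj hinj' A B hA hB
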